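/- arXiv:2501.07920 — 6 statements merged into one kernel-verified Lean document; each statement's English description precedes it below -/
import Mathlib

section
/- For a monotone operator F on subsets of A and any H, X ⊆ A: if X ⊆ G_F(H ∪ X) then X ⊆ G_F(H) (the Accumulate rule of parameterized coinduction). -/
/-! Since `X ⊆ G := Gfp F (H ∪ X)`, the post-fixed point `G ⊆ F (G ∪ H ∪ X)` is already
`G ⊆ F (G ∪ H)`, so `G` is a witness for coinduction into `Gfp F H`. -/

def nuSet {A : Type*} (F : Set A → Set A) : Set A := ⋃₀ {R | R ⊆ F R}

def Gfp {A : Type*} (F : Set A → Set A) (H : Set A) : Set A :=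
  nuSet (fun X => F (X ∪ H))

section

variable {A : Type*} {F : Set A → Set A}

theorem subset_nuSet_of_subset_apply {R : Set A} (hR : R ⊆ F R) : R ⊆ nuSet F :=
  Set.subset_sUnion_of_mem hR

theorem nuSet_subset_apply (hF : Monotone F) : nuSet F ⊆ F (nuSet F) :=
  Set.sUnion_subset fun _ hR => hR.trans (hF (subset_nuSet_of_subset_apply hR))

theorem subset_Gfp_of_subset_apply {H R : Set A} (hR : R ⊆ F (R ∪ H)) : R ⊆ Gfp F H :=
  subset_nuSet_of_subset_apply hR

theorem Gfp_subset_apply (hF : Monotone F) (H : Set A) : Gfp F H ⊆ F (Gfp F H ∪ H) :=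
  nuSet_subset_apply fun _ _ hYZ => hF (Set.union_subset_union_left H hYZ)

end

theorem accumulate {A : Type*} (F : Set A → Set A) (_hF : Monotone F)
    (H X : Set A) (h : X ⊆ Gfp F (H ∪ X)) : X ⊆ Gfp F H := by
  have hpost := Gfp_subset_apply _hF (H ∪ X)
  have hX : Gfp F (H ∪ X) ∪ (H ∪ X) = Gfp F (H ∪ X) ∪ H := by
    rw [← Set.union_assoc, Set.union_right_comm, Set.union_eq_left.2 h]
  rw [hX] at hpost
  exact h.trans (subset_Gfp_of_subset_apply hpost)
end

section
/- For a monotone operator F on subsets of A and any H, X ⊆ A: if X ⊆ F(H ∪ G_F(H)) then X ⊆ G_F(H) (the Step rule of parameterized coinduction). -/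
/-! Since `sSup` on sets is `⋃₀`, `Gfp F H` is by definition the greatest fixed point of the
monotone map `X ↦ F (X ∪ H)` (Knaster–Tarski), so the step rule is just the fixed-point
equation `F (H ∪ Gfp F H) = Gfp F H`. -/

theorem map_Gfp_union {A : Type*} {F : Set A → Set A} (hF : Monotone F) (H : Set A) :
    F (Gfp F H ∪ H) = Gfp F H :=
  OrderHom.map_gfp ⟨fun X => F (X ∪ H), fun _ _ hXY => hF (Set.union_subset_union_left H hXY)⟩

theorem step_rule {A : Type*} (F : Set A → Set A) (_hF : Monotone F)
    (H X : Set A) (h : X ⊆ F (H ∪ Gfp F H)) : X ⊆ Gfp F H := by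
  rwa [Set.union_comm, map_Gfp_union _hF] at h
end

section
/- Soundness of fei: Let TS1, TS2 be labeled transition systems with initial states I1, I2 and let φ ⊆ E1 × E2 be a relation on events. Define feiF_φ(R) = { (s1,s2) | for all e1, s1' with s1 ⇝^{e1} s1', there exist e2, s2' with s2 ⇝^{e2} s2', (e1,e2) ∈ φ, and (s1',s2') ∈ R }, and fei_φ = ν.feiF_φ. If (I1, I2) ∈ fei_φ, then for every trace τ1 of TS1 there exists a trace τ2 of TS2 such that (τ1[i], τ2[i]) ∈ φ for all i ∈ ℕ. -/
/-- A labeled transition system: states, optional-event-labeled steps, an initial state. -/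
structure LTS (S E : Type*) where
  init : S
  step : S → Option E → S → Prop

namespace LTS

/-- Silent transition. -/
def Silent {S E : Type*} (T : LTS S E) (s s' : S) : Prop := T.step s none s'

/-- `Obs T s e s'`: finitely many silent steps followed by an `e`-labeled step. -/
def Obs {S E : Type*} (T : LTS S E) (s : S) (e : E) (s' : S) : Prop :=
  ∃ s'', Relation.ReflTransGen T.Silent s s'' ∧ T.step s'' (some e) s'

/-- `τ` is an (infinite) trace originating from state `s`. -/
def IsTraceFrom {S E : Type*} (T : LTS S E) (s : S) (τ : ℕ → E) : Prop :=
  ∃ π : ℕ → S, π 0 = s ∧ ∀ i, T.Obs (π i) (τ i) (π (i + 1))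

end LTS

/-- The ∀∃-invariant functor. -/
def feiF {S1 S2 E1 E2 : Type*} (T1 : LTS S1 E1) (T2 : LTS S2 E2) (φ : Set (E1 × E2))
    (R : Set (S1 × S2)) : Set (S1 × S2) :=
  {p | ∀ e1 s1', T1.Obs p.1 e1 s1' →
        ∃ e2 s2', T2.Obs p.2 e2 s2' ∧ (e1, e2) ∈ φ ∧ (s1', s2') ∈ R}

/-!
Membership in the greatest fixed point `nuSet (feiF T1 T2 φ)` means some post-fixed point `R`
contains the pair of initial states. Walking along a path of `T1` that produces `τ1`, the
∀∃ condition matches each observable step of `T1` by an observable step of `T2` with a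
`φ`-related event, landing again in `R`; dependent choice turns these matches into a trace of `T2`.
-/

theorem exists_seq_of_forall_exists {β : Type*} (P : ℕ → β → Prop) (r : ℕ → β → β → Prop)
    {b : β} (h0 : P 0 b) (hstep : ∀ n x, P n x → ∃ y, r n x y ∧ P (n + 1) y) :
    ∃ f : ℕ → β, f 0 = b ∧ ∀ n, r n (f n) (f (n + 1)) := by
  choose g hg using hstep
  let f : ∀ n, {x // P n x} := fun n => Nat.rec ⟨b, h0⟩ (fun n x => ⟨g n x x.2, (hg n x x.2).2⟩) n
  exact ⟨fun n => (f n).1, rfl, fun n => (hg n _ (f n).2).1⟩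

theorem exists_related_trace_of_subset_feiF {S1 S2 E1 E2 : Type*} {T1 : LTS S1 E1}
    {T2 : LTS S2 E2} {φ : Set (E1 × E2)} {R : Set (S1 × S2)} (hR : R ⊆ feiF T1 T2 φ R)
    {s1 : S1} {s2 : S2} (hs : (s1, s2) ∈ R) {τ1 : ℕ → E1} (hτ1 : T1.IsTraceFrom s1 τ1) :
    ∃ τ2 : ℕ → E2, T2.IsTraceFrom s2 τ2 ∧ ∀ i, (τ1 i, τ2 i) ∈ φ := by
  obtain ⟨π, rfl, hπ⟩ := hτ1
  obtain ⟨π2, rfl, hπ2⟩ := exists_seq_of_forall_exists (fun i s => (π i, s) ∈ R)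
    (fun i s s' => ∃ e2, T2.Obs s e2 s' ∧ (τ1 i, e2) ∈ φ) hs
    (fun i s hmem => by
      obtain ⟨e2, s', hobs, hφ, hR'⟩ := hR hmem (τ1 i) (π (i + 1)) (hπ i)
      exact ⟨s', ⟨e2, hobs, hφ⟩, hR'⟩)
  choose τ2 hobs hφ using hπ2
  exact ⟨τ2, ⟨π2, rfl, hobs⟩, hφ⟩

theorem fei_sound {S1 S2 E1 E2 : Type*} (T1 : LTS S1 E1) (T2 : LTS S2 E2)
    (φ : Set (E1 × E2)) (h : (T1.init, T2.init) ∈ nuSet (feiF T1 T2 φ)) :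
    ∀ τ1 : ℕ → E1, T1.IsTraceFrom T1.init τ1 →
      ∃ τ2 : ℕ → E2, T2.IsTraceFrom T2.init τ2 ∧ ∀ i, (τ1 i, τ2 i) ∈ φ := by
  obtain ⟨R, hR, hmem⟩ := h
  exact fun τ1 hτ1 => exists_related_trace_of_subset_feiF hR hmem hτ1
end

section
/- Witness lemma: Given the progress function obtained by functional choice on the proof-step relation over Π_φ, define witness(π) coinductively by witness(π) = e · witness(π') where (e, π') = progress(π). Then for π = (s1, s2, τ1) ∈ Π_φ, the sequence τ2 = witness(π) is a trace of s2 and for every i, (τ1[i], τ2[i]) ∈ φ. -/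
/-- Proof states: a state of each system together with a trace of the first state,
where the two states are related by `fei_φ`. -/
def PiSet {S1 S2 E1 E2 : Type*} (T1 : LTS S1 E1) (T2 : LTS S2 E2) (φ : Set (E1 × E2)) :
    Set (S1 × S2 × (ℕ → E1)) :=
  {p | T1.IsTraceFrom p.1 p.2.2 ∧ (p.1, p.2.1) ∈ nuSet (feiF T1 T2 φ)}

/-- The labeled proof-step relation on proof states. -/
def ProofStep {S1 S2 E1 E2 : Type*} (T1 : LTS S1 E1) (T2 : LTS S2 E2) (φ : Set (E1 × E2))
    (p : S1 × S2 × (ℕ → E1)) (e2 : E2) (p' : S1 × S2 × (ℕ → E1)) : Prop :=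
  T1.Obs p.1 (p.2.2 0) p'.1 ∧ T2.Obs p.2.1 e2 p'.2.1 ∧
    (p.2.2 0, e2) ∈ φ ∧ p'.2.2 = fun i => p.2.2 (i + 1)

theorem mem_of_succ_eq_of_mapsTo {α : Type*} {s : Set α} {f : α → α} {u : ℕ → α}
    (h0 : u 0 ∈ s) (hsucc : ∀ n, u (n + 1) = f (u n)) (hf : Set.MapsTo f s s) (n : ℕ) :
    u n ∈ s := by
  induction n with
  | zero => exact h0
  | succ n ih => exact hsucc n ▸ hf ih

theorem apply_eq_of_succ_eq_shift {α : Type*} {τ : ℕ → ℕ → α}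
    (h : ∀ n, τ (n + 1) = fun i => τ n (i + 1)) (n i : ℕ) : τ n i = τ 0 (i + n) := by
  induction n generalizing i with
  | zero => rfl
  | succ n ih => rw [h]; exact (ih (i + 1)).trans (by rw [Nat.add_assoc, Nat.add_comm 1 n])

section ProofStepChain

variable {S1 S2 E1 E2 : Type*} {T1 : LTS S1 E1} {T2 : LTS S2 E2} {φ : Set (E1 × E2)}
  {ρ : ℕ → S1 × S2 × (ℕ → E1)} {τ2 : ℕ → E2}

theorem isTraceFrom_of_forall_proofStep (h : ∀ n, ProofStep T1 T2 φ (ρ n) (τ2 n) (ρ (n + 1))) :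
    T2.IsTraceFrom (ρ 0).2.1 τ2 :=
  ⟨fun n => (ρ n).2.1, rfl, fun n => (h n).2.1⟩

theorem mem_of_forall_proofStep (h : ∀ n, ProofStep T1 T2 φ (ρ n) (τ2 n) (ρ (n + 1))) (i : ℕ) :
    ((ρ 0).2.2 i, τ2 i) ∈ φ := by
  have hshift := apply_eq_of_succ_eq_shift (τ := fun n => (ρ n).2.2) (fun n => (h n).2.2.2) i 0
  simpa only [zero_add, hshift] using (h i).2.2.1

end ProofStepChain

theorem witness {S1 S2 E1 E2 : Type*} (T1 : LTS S1 E1) (T2 : LTS S2 E2)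
    (φ : Set (E1 × E2))
    (progress : (S1 × S2 × (ℕ → E1)) → E2 × (S1 × S2 × (ℕ → E1)))
    (hprog : ∀ p ∈ PiSet T1 T2 φ,
      ProofStep T1 T2 φ p (progress p).1 (progress p).2 ∧ (progress p).2 ∈ PiSet T1 T2 φ)
    (p : S1 × S2 × (ℕ → E1)) (hp : p ∈ PiSet T1 T2 φ)
    -- `πseq` iterates `progress` from `p`; `witness p` is the produced event sequence
    (πseq : ℕ → S1 × S2 × (ℕ → E1)) (h0 : πseq 0 = p)
    (hsucc : ∀ n, πseq (n + 1) = (progress (πseq n)).2)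
    (τ2 : ℕ → E2) (hτ2 : ∀ i, τ2 i = (progress (πseq i)).1) :
    T2.IsTraceFrom p.2.1 τ2 ∧ ∀ i, (p.2.2 i, τ2 i) ∈ φ := by
  have hmem : ∀ n, πseq n ∈ PiSet T1 T2 φ :=
    mem_of_succ_eq_of_mapsTo (h0 ▸ hp) hsucc fun q hq => (hprog q hq).2
  have hstep : ∀ n, ProofStep T1 T2 φ (πseq n) (τ2 n) (πseq (n + 1)) := fun n => by
    rw [hτ2, hsucc]
    exact (hprog _ (hmem n)).1
  subst h0
  exact ⟨isTraceFrom_of_forall_proofStep hstep, mem_of_forall_proofStep hstep⟩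
end

section
/- Coinductive characterization of safety closure: define safeF(C) = { (e1·τ1, e2·τ2, ψ) | Δ_{e1,e2}(ψ) ≠ ∅ ∧ (τ1, τ2, Δ_{e1,e2}(ψ)) ∈ C } and safe = ν.safeF. Then for all traces τ1, τ2 and relations ψ: (τ1,τ2) ∈ |ψ|_safe if and only if (τ1,τ2,ψ) ∈ safe. -/
/-- Prepend an event to an infinite trace. -/
def cons {E : Type*} (e : E) (τ : ℕ → E) : ℕ → E
  | 0 => e
  | n + 1 => τ n

/-- The trace obtained by dropping the first letter. -/
def tail {E : Type*} (τ : ℕ → E) : ℕ → E := fun i => τ (i + 1)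

/-- Concatenation of the length-`n` prefix of `τ` with the infinite trace `τ'`. -/
def pcat {E : Type*} (τ : ℕ → E) (n : ℕ) (τ' : ℕ → E) : ℕ → E :=
  fun i => if i < n then τ i else τ' (i - n)

/-- The safety closure of a binary trace relation. -/
def safeCl {E1 E2 : Type*} (ψ : Set ((ℕ → E1) × (ℕ → E2))) : Set ((ℕ → E1) × (ℕ → E2)) :=
  {p | ∀ n, ∃ (τ1' : ℕ → E1) (τ2' : ℕ → E2), (pcat p.1 n τ1', pcat p.2 n τ2') ∈ ψ}

/-- The Brzozowski-style derivative of a binary trace relation. -/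
def rderiv {E1 E2 : Type*} (e1 : E1) (e2 : E2) (ψ : Set ((ℕ → E1) × (ℕ → E2))) :
    Set ((ℕ → E1) × (ℕ → E2)) :=
  {p | (cons e1 p.1, cons e2 p.2) ∈ ψ}

/-- The functor for the coinductive characterization of the safety closure. -/
def safeF {E1 E2 : Type*}
    (C : Set ((ℕ → E1) × (ℕ → E2) × Set ((ℕ → E1) × (ℕ → E2)))) :
    Set ((ℕ → E1) × (ℕ → E2) × Set ((ℕ → E1) × (ℕ → E2))) :=
  {t | rderiv (t.1 0) (t.2.1 0) t.2.2 ≠ ∅ ∧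
       (tail t.1, tail t.2.1, rderiv (t.1 0) (t.2.1 0) t.2.2) ∈ C}

/-- The coinductive safety relation. -/
def safe {E1 E2 : Type*} : Set ((ℕ → E1) × (ℕ → E2) × Set ((ℕ → E1) × (ℕ → E2))) :=
  nuSet safeF

lemma pcat_zero {E : Type*} (τ τ' : ℕ → E) : pcat τ 0 τ' = τ' :=
  funext fun i => by simp [pcat]

lemma pcat_succ {E : Type*} (τ τ' : ℕ → E) (n : ℕ) :
    pcat τ (n + 1) τ' = cons (τ 0) (pcat (tail τ) n τ') := by
  funext i
  cases i with
  | zero => simp [pcat, cons]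
  | succ i => simp [pcat, cons, tail, Nat.succ_lt_succ_iff, Nat.succ_sub_succ]

lemma pcat_one {E : Type*} (τ τ' : ℕ → E) : pcat τ 1 τ' = cons (τ 0) τ' := by
  rw [pcat_succ, pcat_zero]

lemma safeF_mono {E1 E2 : Type*}
    {C D : Set ((ℕ → E1) × (ℕ → E2) × Set ((ℕ → E1) × (ℕ → E2)))} (h : C ⊆ D) :
    safeF C ⊆ safeF D := fun _ ht => ⟨ht.1, h ht.2⟩

lemma safe_dest {E1 E2 : Type*} : (safe : Set ((ℕ → E1) × (ℕ → E2) × _)) ⊆ safeF safe := by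
  intro x hx
  obtain ⟨R, hR, hxR⟩ := Set.mem_sUnion.mp hx
  exact safeF_mono (fun y hy => Set.mem_sUnion.mpr ⟨R, hR, hy⟩) (hR hxR)

lemma safe_pcat {E1 E2 : Type*} :
    ∀ (n : ℕ) (τ1 : ℕ → E1) (τ2 : ℕ → E2) (ψ : Set ((ℕ → E1) × (ℕ → E2))),
      (τ1, τ2, ψ) ∈ safe →
      ∃ (τ1' : ℕ → E1) (τ2' : ℕ → E2), (pcat τ1 n τ1', pcat τ2 n τ2') ∈ ψ := by
  intro n
  induction n with
  | zero =>
    intro τ1 τ2 ψ h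
    obtain ⟨hne, _⟩ := safe_dest h
    obtain ⟨⟨σ1, σ2⟩, hσ⟩ := Set.nonempty_iff_ne_empty.mpr hne
    exact ⟨cons (τ1 0) σ1, cons (τ2 0) σ2, by simpa [pcat_zero, rderiv] using hσ⟩
  | succ n ih =>
    intro τ1 τ2 ψ h
    obtain ⟨_, htail⟩ := safe_dest h
    obtain ⟨σ1, σ2, hσ⟩ := ih _ _ _ htail
    exact ⟨σ1, σ2, by simpa [pcat_succ, rderiv] using hσ⟩

theorem safeCl_iff_safe {E1 E2 : Type*} (ψ : Set ((ℕ → E1) × (ℕ → E2)))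
    (τ1 : ℕ → E1) (τ2 : ℕ → E2) :
    (τ1, τ2) ∈ safeCl ψ ↔ (τ1, τ2, ψ) ∈ safe := by
  constructor
  · intro h
    refine ⟨{t | (t.1, t.2.1) ∈ safeCl t.2.2}, ?_, h⟩
    rintro ⟨σ1, σ2, φ⟩ hs
    constructor
    · obtain ⟨σ1', σ2', hσ⟩ := hs 1
      rw [pcat_one, pcat_one] at hσ
      exact Set.nonempty_iff_ne_empty.mp ⟨(σ1', σ2'), hσ⟩
    · intro n
      obtain ⟨σ1', σ2', hσ⟩ := hs (n + 1)
      rw [pcat_succ, pcat_succ] at hσ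
      exact ⟨σ1', σ2', hσ⟩
  · intro h n
    exact safe_pcat n τ1 τ2 ψ h
end

section
/- The strengthening closure strclo(H) = { (s1,s2,ψ) | ∃ ψ' ⊆ ψ, (s1,s2,ψ') ∈ H } is compatible with the monotone functor feF, i.e., strclo ∘ feF ⊆ feF ∘ strclo (pointwise on sets of triples). -/
/-- The `next` operator on pairs of states, relative to relation `R` on triples. -/
def nextOp {S1 S2 E1 E2 : Type*}
    (R : Set (S1 × S2 × Set ((ℕ → E1) × (ℕ → E2)))) (e1 : E1) (e2 : E2)
    (ψ : Set ((ℕ → E1) × (ℕ → E2))) : Set (S1 × S2) :=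
  {p | rderiv e1 e2 ψ ≠ ∅ ∧ (p.1, p.2, rderiv e1 e2 ψ) ∈ R}

/-- The functor underlying the coinductive relation `fe`. -/
def feF {S1 S2 E1 E2 : Type*} (T1 : LTS S1 E1) (T2 : LTS S2 E2)
    (R : Set (S1 × S2 × Set ((ℕ → E1) × (ℕ → E2)))) :
    Set (S1 × S2 × Set ((ℕ → E1) × (ℕ → E2))) :=
  {t | ∀ e1 s1', T1.Obs t.1 e1 s1' →
        ∃ e2 s2', T2.Obs t.2.1 e2 s2' ∧ (s1', s2') ∈ nextOp R e1 e2 t.2.2}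

/-- The strengthening closure: reason up to stronger trace relations. -/
def strclo {S1 S2 E1 E2 : Type*}
    (H : Set (S1 × S2 × Set ((ℕ → E1) × (ℕ → E2)))) :
    Set (S1 × S2 × Set ((ℕ → E1) × (ℕ → E2))) :=
  {t | ∃ ψ' ⊆ t.2.2, (t.1, t.2.1, ψ') ∈ H}

/-! A witness `ψ' ⊆ ψ` for the premise yields the witness `rderiv e1 e2 ψ' ⊆ rderiv e1 e2 ψ`
for the conclusion, since derivatives are monotone; nonemptiness passes to the larger set. -/

theorem rderiv_mono {E1 E2 : Type*} (e1 : E1) (e2 : E2) : Monotone (rderiv e1 e2) :=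
  fun _ _ hψ _ hp => hψ hp

theorem nextOp_subset_nextOp_strclo {S1 S2 E1 E2 : Type*}
    {R : Set (S1 × S2 × Set ((ℕ → E1) × (ℕ → E2)))} {e1 : E1} {e2 : E2}
    {ψ' ψ : Set ((ℕ → E1) × (ℕ → E2))} (hψ : ψ' ⊆ ψ) :
    nextOp R e1 e2 ψ' ⊆ nextOp (strclo R) e1 e2 ψ := by
  rintro ⟨s1, s2⟩ ⟨hne, hR⟩
  have hderiv : rderiv e1 e2 ψ' ⊆ rderiv e1 e2 ψ := rderiv_mono e1 e2 hψ
  exact ⟨fun hempty => hne (Set.eq_empty_of_subset_empty (hempty ▸ hderiv)), _, hderiv, hR⟩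

theorem strclo_compatible {S1 S2 E1 E2 : Type*} (T1 : LTS S1 E1) (T2 : LTS S2 E2)
    (R : Set (S1 × S2 × Set ((ℕ → E1) × (ℕ → E2)))) :
    strclo (feF T1 T2 R) ⊆ feF T1 T2 (strclo R) := by
  rintro ⟨s1, s2, ψ⟩ ⟨ψ', hψ, hF⟩ e1 s1' hobs1
  obtain ⟨e2, s2', hobs2, hnext⟩ := hF e1 s1' hobs1
  exact ⟨e2, s2', hobs2, nextOp_subset_nextOp_strclo hψ hnext⟩
end
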